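/- arXiv:2508.06935 — 2 statements merged into one kernel-verified Lean document; each statement's English description precedes it below -/
import Mathlib

section
/- Let ℋ = (𝒰, ℱ, 𝒰*) be a history graph for (o,T) for the j-neighbour Bootstrap Percolation. Then, as an inequality of real numbers, 2·(Φ_E(G) − j + 1)·|𝒰| + δ − Φ_E(G) ≤ (Φ_E(G) + Δ − 2j + 2)·|𝒰*|. -/
open Classical
noncomputable section

namespace Paper

variable {V : Type*}

/-- Number of neighbours of `x` whose value is `1` (`true`). -/
def cCount (G : SimpleGraph V) [DecidableRel G.Adj] [∀ v, Fintype (G.neighborSet v)]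
    (η : V → Bool) (x : V) : ℕ :=
  ((G.neighborFinset x).filter fun y => η y = true).card

/-- The `j`-neighbour Bootstrap Percolation with noise set `N` and initial configuration `ξ`. -/
noncomputable def bootstrapPerc (G : SimpleGraph V) [DecidableRel G.Adj]
    [∀ v, Fintype (G.neighborSet v)] (j : ℕ) (N : Set (V × ℕ)) (ξ : V → Bool) :
    ℕ → V → Bool
  | 0 => ξ
  | t + 1 => fun x =>
      if (x, t + 1) ∈ N then false
      else bootstrapPerc G j N ξ t x || decide (j ≤ cCount G (bootstrapPerc G j N ξ t) x)

/-- The `j`-threshold Consensus Process with noise set `N` and initial configuration `ξ`. -/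
noncomputable def consensus (G : SimpleGraph V) [DecidableRel G.Adj]
    [∀ v, Fintype (G.neighborSet v)] (j : ℕ) (N : Set (V × ℕ)) (ξ : V → Bool) :
    ℕ → V → Bool
  | 0 => ξ
  | t + 1 => fun x =>
      if (x, t + 1) ∈ N then false
      else decide (j ≤ cCount G (consensus G j N ξ t) x)

/-- `∂_E K`: number of edges with exactly one endpoint in `K`. -/
def edgeBoundaryCard (G : SimpleGraph V) [DecidableRel G.Adj]
    [∀ v, Fintype (G.neighborSet v)] (K : Finset V) : ℕ :=
  ∑ x ∈ K, ((G.neighborFinset x).filter fun y => y ∉ K).card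

/-- The edge expansion constant `Φ_E(G)`. -/
noncomputable def edgeExpansion (G : SimpleGraph V) [DecidableRel G.Adj]
    [∀ v, Fintype (G.neighborSet v)] : ℝ :=
  sInf {r : ℝ | ∃ K : Finset V, K.Nonempty ∧ r = (edgeBoundaryCard G K : ℝ) / (K.card : ℝ)}

/-- `∂_V K`: number of vertices outside `K` adjacent to a vertex of `K`. -/
def vertexBoundaryCard [DecidableEq V] (G : SimpleGraph V) [DecidableRel G.Adj]
    [∀ v, Fintype (G.neighborSet v)] (K : Finset V) : ℕ :=
  ((K.biUnion fun x => G.neighborFinset x) \ K).card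

/-- The vertex expansion constant `Φ_V(G)`. -/
noncomputable def vertexExpansion [DecidableEq V] (G : SimpleGraph V) [DecidableRel G.Adj]
    [∀ v, Fintype (G.neighborSet v)] : ℝ :=
  sInf {r : ℝ | ∃ K : Finset V, K.Nonempty ∧ r = (vertexBoundaryCard G K : ℝ) / (K.card : ℝ)}

/-- A history graph `(𝒰, ℱ, 𝒰*)` for `(o, T)`.  If `bp = true` it is a history graph for the
`j`-neighbour Bootstrap Percolation (one outgoing straight edge and `deg x − j + 1` outgoing
oblique edges at every vertex of `𝒰 \ 𝒰*`); if `bp = false` it is a history graph for the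
`j`-threshold Consensus Process (no straight edges and `deg x − j + 1` outgoing oblique edges). -/
structure HistoryGraph (G : SimpleGraph V) [DecidableRel G.Adj]
    [∀ v, Fintype (G.neighborSet v)] (j : ℕ) (o : V) (T : ℕ) (bp : Bool) where
  U : Finset (V × ℕ)
  F : Finset ((V × ℕ) × (V × ℕ))
  Ustar : Finset (V × ℕ)
  ustar_subset : Ustar ⊆ U
  edge_mem_fst : ∀ e ∈ F, e.1 ∈ U
  edge_mem_snd : ∀ e ∈ F, e.2 ∈ U
  edge_time : ∀ e ∈ F, e.1.2 = e.2.2 + 1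
  edge_space : ∀ e ∈ F, e.1.1 = e.2.1 ∨ G.Adj e.1.1 e.2.1
  conn : ∀ u ∈ U, ∀ v ∈ U,
    Relation.ReflTransGen (fun a b => (a, b) ∈ F ∨ (b, a) ∈ F) u v
  root_mem : (o, T) ∈ U
  time_range : ∀ u ∈ U, u ≠ (o, T) → 1 ≤ u.2 ∧ u.2 ≤ T
  time_one_star : ∀ u ∈ U, u.2 = 1 → u ∈ Ustar
  star_no_out : ∀ u ∈ Ustar, ∀ e ∈ F, e.1 ≠ u
  straight_count : ∀ u ∈ U, u ∉ Ustar →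
      (F.filter fun e => e.1 = u ∧ e.2.1 = u.1).card = cond bp 1 0
  oblique_count : ∀ u ∈ U, u ∉ Ustar →
      (F.filter fun e => e.1 = u ∧ e.2.1 ≠ u.1).card = G.degree u.1 + 1 - j

/-- The strong product `G ⊠ ℕ`. -/
def strongProd (G : SimpleGraph V) : SimpleGraph (V × ℕ) where
  Adj p q := p ≠ q ∧ (p.2 ≤ q.2 + 1 ∧ q.2 ≤ p.2 + 1) ∧ (p.1 = q.1 ∨ G.Adj p.1 q.1)
  symm := by
    refine ⟨?_⟩
    rintro p q ⟨h1, ⟨h2, h3⟩, h4⟩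
    exact ⟨h1.symm, ⟨h3, h2⟩, h4.elim (fun e => Or.inl e.symm) fun a => Or.inr a.symm⟩
  loopless := ⟨fun p h => h.1 rfl⟩

/-- The connected component of `p` in the subgraph of `G ⊠ ℕ` induced by `Z`. -/
def cluster (G : SimpleGraph V) (Z : Set (V × ℕ)) (p : V × ℕ) : Set (V × ℕ) :=
  {q | p ∈ Z ∧ q ∈ Z ∧
    Relation.ReflTransGen (fun a b => a ∈ Z ∧ b ∈ Z ∧ (strongProd G).Adj a b) p q}

/-- The witness-root property defining `j ≤ j̄`. -/
def radialGood (G : SimpleGraph V) [DecidableRel G.Adj] [∀ v, Fintype (G.neighborSet v)]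
    (j : ℕ) : Prop :=
  ∃ r : V, ∀ x : V,
    j ≤ ((G.neighborFinset x).filter fun y => G.dist r y = G.dist r x + 1).card

end Paper

/-! Slice the history graph by time: `K_t` is the set of sites of `𝒰` at time `t` and `W_t` the
set of sites of `𝒰 \ 𝒰*` at time `t + 1`. The straight edges give `W_t ⊆ K_t`, and the oblique
edges leave every `x ∈ W_t` with fewer than `j` neighbours outside `K_t`. An edge leaving `W_t`
either leaves `K_t` or ends in `K_t \ W_t`, where it competes with the edges leaving `K_t` for the
degree of its endpoint; hence `|∂K_t| + |∂W_t| ≤ Δ |K_t \ W_t| + 2 (j - 1) |W_t|`, and the left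
side is at least `Φ_E(G) (|K_t| + |W_t|)`. Summing over `t < T`, with `Σ |K_t| = |𝒰| - |K_T|`,
`Σ |W_t| = |𝒰| - |𝒰*|`, `|K_T| ≥ 1` and `Φ_E(G) ≤ δ ≤ Δ`, gives the inequality. -/

namespace Paper

open Finset

variable {V : Type*} (G : SimpleGraph V) [DecidableRel G.Adj] [∀ v, Fintype (G.neighborSet v)]

theorem edgeBoundaryCard_singleton (x : V) : edgeBoundaryCard G {x} = G.degree x := by
  rw [edgeBoundaryCard, sum_singleton, ← G.card_neighborFinset_eq_degree]
  congr 1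
  exact filter_true_of_mem fun y hy => by simpa using (G.mem_neighborFinset x y).1 hy |>.ne'

theorem edgeExpansion_le_div {K : Finset V} (hK : K.Nonempty) :
    edgeExpansion G ≤ edgeBoundaryCard G K / #K :=
  csInf_le ⟨0, by rintro r ⟨K, -, rfl⟩; positivity⟩ ⟨K, hK, rfl⟩

theorem edgeExpansion_mul_card_le (K : Finset V) :
    edgeExpansion G * #K ≤ edgeBoundaryCard G K := by
  rcases K.eq_empty_or_nonempty with rfl | hK
  · simp [edgeBoundaryCard]
  · exact (le_div_iff₀ (by exact_mod_cast hK.card_pos)).1 (edgeExpansion_le_div G hK)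

theorem edgeExpansion_le_degree (x : V) : edgeExpansion G ≤ G.degree x := by
  simpa [edgeBoundaryCard_singleton] using edgeExpansion_le_div G (singleton_nonempty x)

theorem edgeExpansion_le_of_isGLB_degree [Nonempty V] {δ : ℕ}
    (hδ : IsGLB (Set.range fun x => G.degree x) δ) : edgeExpansion G ≤ δ := by
  obtain ⟨x, hx⟩ : δ ∈ Set.range fun x => G.degree x :=
    hδ.csInf_eq (Set.range_nonempty _) ▸ csInf_mem (Set.range_nonempty _)
  exact hx ▸ edgeExpansion_le_degree G x

theorem card_neighborFinset_filter_mem (A : Finset V) (x : V) :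
    #{y ∈ G.neighborFinset x | y ∈ A} = #{y ∈ A | G.Adj x y} := by
  congr 1
  ext y
  simp [and_comm]

theorem sum_card_neighborFinset_filter_mem_comm (A B : Finset V) :
    ∑ x ∈ A, #{y ∈ G.neighborFinset x | y ∈ B} = ∑ y ∈ B, #{x ∈ G.neighborFinset y | x ∈ A} := by
  simp_rw [card_neighborFinset_filter_mem, card_filter]
  rw [sum_comm]
  exact sum_congr rfl fun y _ => sum_congr rfl fun x _ => by simp only [G.adj_comm x y]

theorem edgeBoundaryCard_le_sum_outside_add_sum_sdiff (K W : Finset V) :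
    edgeBoundaryCard G W ≤ ∑ x ∈ W, #{y ∈ G.neighborFinset x | y ∉ K} +
      ∑ y ∈ K \ W, #{x ∈ G.neighborFinset y | x ∈ W} := by
  rw [← sum_card_neighborFinset_filter_mem_comm, ← sum_add_distrib]
  refine sum_le_sum fun x _ => (card_le_card fun y hy => ?_).trans (card_union_le _ _)
  by_cases hyK : y ∈ K <;> simp_all

theorem edgeBoundaryCard_add_edgeBoundaryCard_le {K W : Finset V} (hWK : W ⊆ K) :
    edgeBoundaryCard G K + edgeBoundaryCard G W ≤
      ∑ x ∈ K \ W, G.degree x + 2 * ∑ x ∈ W, #{y ∈ G.neighborFinset x | y ∉ K} := by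
  have hsplit : ∀ y ∈ K \ W,
      #{z ∈ G.neighborFinset y | z ∉ K} + #{z ∈ G.neighborFinset y | z ∈ W} ≤ G.degree y := by
    intro y _
    calc _ ≤ #{z ∈ G.neighborFinset y | z ∉ K} + #{z ∈ G.neighborFinset y | ¬z ∉ K} := by
          refine Nat.add_le_add_left (card_le_card fun z hz => ?_) _
          simp only [mem_filter] at hz ⊢
          exact ⟨hz.1, not_not.2 (hWK hz.2)⟩
      _ = G.degree y := by rw [card_filter_add_card_filter_not, G.card_neighborFinset_eq_degree]
  have hK : edgeBoundaryCard G K = ∑ x ∈ K \ W, #{y ∈ G.neighborFinset x | y ∉ K} +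
      ∑ x ∈ W, #{y ∈ G.neighborFinset x | y ∉ K} := (sum_sdiff hWK).symm
  have hsum := sum_le_sum hsplit
  rw [sum_add_distrib] at hsum
  linarith [edgeBoundaryCard_le_sum_outside_add_sum_sdiff G K W]

theorem edgeExpansion_mul_card_add_card_le {K W : Finset V} (hWK : W ⊆ K) {j Δ : ℕ}
    (hW : ∀ x ∈ W, #{y ∈ G.neighborFinset x | y ∉ K} < j) (hΔ : ∀ x, G.degree x ≤ Δ) :
    edgeExpansion G * (#K + #W) + 2 * #W ≤ Δ * #(K \ W) + 2 * j * #W := by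
  have hnat : edgeBoundaryCard G K + edgeBoundaryCard G W + 2 * #W ≤
      Δ * #(K \ W) + 2 * j * #W := by
    have hdeg : ∑ x ∈ K \ W, G.degree x ≤ Δ * #(K \ W) := by
      simpa [mul_comm] using sum_le_sum fun x (_ : x ∈ K \ W) => hΔ x
    have hout : ∑ x ∈ W, (#{y ∈ G.neighborFinset x | y ∉ K} + 1) ≤ j * #W := by
      simpa [mul_comm] using sum_le_sum fun x hx => Nat.succ_le_of_lt (hW x hx)
    rw [sum_add_distrib, sum_const, smul_eq_mul, mul_one] at hout
    linarith [edgeBoundaryCard_add_edgeBoundaryCard_le G hWK]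
  have hK := edgeExpansion_mul_card_le G K
  have hW := edgeExpansion_mul_card_le G W
  have hreal : ((edgeBoundaryCard G K + edgeBoundaryCard G W + 2 * #W : ℕ) : ℝ) ≤
      ((Δ * #(K \ W) + 2 * j * #W : ℕ) : ℝ) := by exact_mod_cast hnat
  push_cast at hreal
  linarith

section Slices

def slice (S : Finset (V × ℕ)) (t : ℕ) : Finset V := {u ∈ S | u.2 = t}.image Prod.fst

variable {S : Finset (V × ℕ)} {t : ℕ}

@[simp]
theorem mem_slice {x : V} : x ∈ slice S t ↔ (x, t) ∈ S := by
  simp only [slice, mem_image, mem_filter]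
  exact ⟨fun ⟨u, ⟨hu, ht⟩, hx⟩ => hx ▸ ht ▸ hu, fun h => ⟨(x, t), ⟨h, rfl⟩, rfl⟩⟩

theorem card_slice : #(slice S t) = #{u ∈ S | u.2 = t} :=
  card_image_of_injOn fun u hu v hv huv => by
    rw [mem_coe, mem_filter] at hu hv
    exact Prod.ext huv (hu.2.trans hv.2.symm)

theorem sum_card_slice {n : ℕ} (hS : ∀ u ∈ S, u.2 < n) :
    ∑ t ∈ range n, #(slice S t) = #S := by
  simp only [card_slice]
  exact (card_eq_sum_card_fiberwise fun u hu => mem_range.2 (hS u hu)).symm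

end Slices

namespace HistoryGraph

variable {G} {j : ℕ} {o : V} {T : ℕ}

theorem time_le {bp : Bool} (H : HistoryGraph G j o T bp) {u : V × ℕ} (hu : u ∈ H.U) :
    u.2 ≤ T := by
  by_cases h : u = (o, T)
  · rw [h]
  · exact (H.time_range u hu h).2

theorem exists_straight_edge (H : HistoryGraph G j o T true) {u : V × ℕ} (hu : u ∈ H.U)
    (hus : u ∉ H.Ustar) : ∃ t, u.2 = t + 1 ∧ (u.1, t) ∈ H.U := by
  obtain ⟨e, he⟩ := card_pos.1 (by rw [H.straight_count u hu hus]; exact Nat.one_pos)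
  obtain ⟨heF, rfl, hx⟩ := mem_filter.1 he
  refine ⟨e.2.2, H.edge_time e heF, ?_⟩
  simpa [← hx] using H.edge_mem_snd e heF

theorem degree_add_one_sub_le {bp : Bool} (H : HistoryGraph G j o T bp) {x : V} {t : ℕ}
    (hu : (x, t + 1) ∈ H.U) (hus : (x, t + 1) ∉ H.Ustar) :
    G.degree x + 1 - j ≤ #{y ∈ G.neighborFinset x | (y, t) ∈ H.U} := by
  rw [← H.oblique_count _ hu hus]
  refine card_le_card_of_injOn (fun e => e.2.1) (fun e he => ?_) fun e he e' he' hee => ?_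
  · obtain ⟨heF, he1, hne⟩ := mem_filter.1 he
    have ht : e.2.2 = t := by simpa [he1] using (H.edge_time e heF).symm
    have hadj : G.Adj x e.2.1 := by
      simpa [he1] using (H.edge_space e heF).resolve_left (by simpa [he1] using Ne.symm hne)
    refine mem_filter.2 ⟨(G.mem_neighborFinset _ _).2 hadj, ?_⟩
    rw [← ht]
    exact H.edge_mem_snd e heF
  · rw [mem_coe, mem_filter] at he he'
    have ht := H.edge_time e he.1
    have ht' := H.edge_time e' he'.1
    rw [he.2.1] at ht
    rw [he'.2.1] at ht'
    exact Prod.ext (he.2.1.trans he'.2.1.symm) (Prod.ext hee (by omega))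

theorem slice_sdiff_succ_subset (H : HistoryGraph G j o T true) (t : ℕ) :
    slice (H.U \ H.Ustar) (t + 1) ⊆ slice H.U t := fun x hx => by
  obtain ⟨hu, hus⟩ := mem_sdiff.1 (mem_slice.1 hx)
  obtain ⟨s, hs, hsu⟩ := H.exists_straight_edge hu hus
  obtain rfl : s = t := by simpa using hs.symm
  exact mem_slice.2 hsu

theorem card_neighborFinset_filter_notMem_slice_lt {bp : Bool} (H : HistoryGraph G j o T bp)
    {x : V} {t : ℕ} (hx : x ∈ slice (H.U \ H.Ustar) (t + 1)) :
    #{y ∈ G.neighborFinset x | y ∉ slice H.U t} < j := by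
  obtain ⟨hu, hus⟩ := mem_sdiff.1 (mem_slice.1 hx)
  have hin := H.degree_add_one_sub_le hu hus
  have hsplit := card_filter_add_card_filter_not (s := G.neighborFinset x) (fun y => y ∉ slice H.U t)
  simp only [not_not, mem_slice, G.card_neighborFinset_eq_degree] at hsplit ⊢
  omega

theorem sum_range_card_slice_add_card_slice {bp : Bool} (H : HistoryGraph G j o T bp) :
    ∑ t ∈ range T, #(slice H.U t) + #(slice H.U T) = #H.U := by
  rw [← sum_range_succ]
  exact sum_card_slice fun u hu => Nat.lt_succ_of_le (H.time_le hu)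

theorem sum_range_card_slice_sdiff_succ (H : HistoryGraph G j o T true) :
    ∑ t ∈ range T, #(slice (H.U \ H.Ustar) (t + 1)) = #(H.U \ H.Ustar) := by
  have h0 : slice (H.U \ H.Ustar) 0 = ∅ := eq_empty_of_forall_notMem fun x hx => by
    obtain ⟨hu, hus⟩ := mem_sdiff.1 (mem_slice.1 hx)
    obtain ⟨s, hs, -⟩ := H.exists_straight_edge hu hus
    exact absurd hs (by simp)
  rw [← sum_card_slice (n := T + 1) fun u hu => Nat.lt_succ_of_le (H.time_le (mem_sdiff.1 hu).1),
    sum_range_succ', h0, card_empty, add_zero]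

theorem edgeExpansion_mul_card_add_card_le (H : HistoryGraph G j o T true) {Δ : ℕ}
    (hΔ : ∀ x, G.degree x ≤ Δ) :
    edgeExpansion G * (2 * #H.U - #H.Ustar - #(slice H.U T)) + 2 * (#H.U - #H.Ustar : ℝ) ≤
      Δ * (#H.Ustar - #(slice H.U T) : ℝ) + 2 * j * (#H.U - #H.Ustar : ℝ) := by
  have hlevel := sum_le_sum fun t (_ : t ∈ range T) =>
    Paper.edgeExpansion_mul_card_add_card_le G (H.slice_sdiff_succ_subset t)
      (fun x hx => H.card_neighborFinset_filter_notMem_slice_lt hx) hΔ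
  simp only [sum_add_distrib, ← mul_sum, ← Nat.cast_sum] at hlevel
  have hK : ((∑ t ∈ range T, #(slice H.U t) : ℕ) : ℝ) = #H.U - #(slice H.U T) := by
    rw [← H.sum_range_card_slice_add_card_slice]; push_cast; ring
  have hW : ((∑ t ∈ range T, #(slice (H.U \ H.Ustar) (t + 1)) : ℕ) : ℝ) = #H.U - #H.Ustar := by
    rw [H.sum_range_card_slice_sdiff_succ, ← card_sdiff_add_card_eq_card H.ustar_subset]
    push_cast; ring
  have hKW : ((∑ t ∈ range T, #(slice H.U t \ slice (H.U \ H.Ustar) (t + 1)) : ℕ) : ℝ) +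
      ((∑ t ∈ range T, #(slice (H.U \ H.Ustar) (t + 1)) : ℕ) : ℝ) =
      ((∑ t ∈ range T, #(slice H.U t) : ℕ) : ℝ) := by
    rw [← Nat.cast_add, ← sum_add_distrib]
    exact congrArg _ (sum_congr rfl fun t _ =>
      card_sdiff_add_card_eq_card (H.slice_sdiff_succ_subset t))
  rw [hK, hW] at hlevel hKW
  rw [eq_sub_of_add_eq hKW] at hlevel
  linarith

end HistoryGraph

end Paper

open Paper in
theorem historyGraph_edge_expansion_inequality_BP_general
    {V : Type*}
    (G : SimpleGraph V) [DecidableRel G.Adj] [∀ v, Fintype (G.neighborSet v)]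
    (Δ : ℕ) (hΔ : IsLUB (Set.range fun x => G.degree x) Δ)
    (δ : ℕ) (hδ : IsGLB (Set.range fun x => G.degree x) δ)
    (j : ℕ)
    (o : V) (T : ℕ) (H : HistoryGraph G j o T true) :
    2 * (edgeExpansion G - j + 1) * H.U.card + δ - edgeExpansion G ≤
      (edgeExpansion G + Δ - 2 * j + 2) * H.Ustar.card := by
  have hdeg : ∀ x, G.degree x ≤ Δ := fun x => hΔ.1 ⟨x, rfl⟩
  have hδΔ : (δ : ℝ) ≤ Δ := by exact_mod_cast (hδ.1 ⟨o, rfl⟩).trans (hdeg o)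
  have : Nonempty V := ⟨o⟩
  have hΦδ := edgeExpansion_le_of_isGLB_degree G hδ
  have htop : (1 : ℝ) ≤ (slice H.U T).card := by
    exact_mod_cast Finset.card_pos.2 ⟨o, mem_slice.2 H.root_mem⟩
  have hcount := H.edgeExpansion_mul_card_add_card_le hdeg
  linarith [mul_le_mul_of_nonneg_left htop (sub_nonneg.2 (hΦδ.trans hδΔ))]

open Paper in
/-- the improved history-graph inequality (Lemma 4.5, ineq. (4.4)) for
Bootstrap Percolation. -/
theorem historyGraph_edge_expansion_inequality_BP
    {V : Type*} [Infinite V]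
    (G : SimpleGraph V) [DecidableRel G.Adj] [∀ v, Fintype (G.neighborSet v)]
    (hconn : G.Connected)
    (Δ : ℕ) (hΔ : IsLUB (Set.range fun x => G.degree x) Δ)
    (δ : ℕ) (hδ : IsGLB (Set.range fun x => G.degree x) δ)
    (j : ℕ) (hj1 : 1 ≤ j) (hjδ : j ≤ δ)
    (o : V) (T : ℕ) (H : HistoryGraph G j o T true) :
    2 * (edgeExpansion G - j + 1) * H.U.card + δ - edgeExpansion G ≤
      (edgeExpansion G + Δ - 2 * j + 2) * H.Ustar.card :=
  historyGraph_edge_expansion_inequality_BP_general G Δ hΔ δ hδ j o T H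
end
end

section
/- Let j := ⌊Δ/2 + 1⌋ and assume j ≤ δ. Fix any function L : V×ℕ≥1 → [0,1], any ε ∈ [0,1] and any initial configuration ξ ∈ {0,1}^V. Let χ be the j-threshold Consensus Process with noise set N_ε = {(x,t) : L_x(t) < ε} started from ξ, and let σ be the ε-noise Majority Vote Process driven by the same L started from ξ. Then χ_x(t) ≤ σ_x(t) for every x ∈ V and every t ∈ ℕ. -/
open Classical
noncomputable section

namespace Paper

/-- The `ε`-noise Majority Vote Process driven by the values `L : V × ℕ≥1 → [0,1]`. -/
noncomputable def majorityVote {V : Type*} (G : SimpleGraph V) [DecidableRel G.Adj]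
    [∀ v, Fintype (G.neighborSet v)] (ε : ℝ) (L : V × ℕ → ℝ) (ξ : V → Bool) :
    ℕ → V → Bool
  | 0 => ξ
  | t + 1 => fun x =>
      if L (x, t + 1) < ε / 2 then false
      else if L (x, t + 1) < ε then true
      else if (cCount G (majorityVote G ε L ξ t) x : ℝ) < (G.degree x : ℝ) / 2 then false
      else if (G.degree x : ℝ) / 2 < (cCount G (majorityVote G ε L ξ t) x : ℝ) then true
      else majorityVote G ε L ξ t x

end Paper

/-! A threshold above half of every degree makes each noise-free consensus update to `1` a
strict-majority update, and the consensus noise set `{L < ε}` contains both noise bands of the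
majority vote, where the consensus process is `0` anyway. Neighbour counts are monotone in the
configuration, so the domination propagates by induction on `t`. -/

namespace Paper

variable {V : Type*} (G : SimpleGraph V) [DecidableRel G.Adj] [∀ v, Fintype (G.neighborSet v)]

theorem cCount_mono {η η' : V → Bool} (h : η ≤ η') (x : V) :
    cCount G η x ≤ cCount G η' x :=
  Finset.card_le_card <| Finset.monotone_filter_right _ fun y _ hy =>
    le_antisymm (Bool.le_true _) (hy ▸ h y)

theorem consensus_succ_eq_true {j : ℕ} {N : Set (V × ℕ)} {ξ : V → Bool} {t : ℕ} {x : V}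
    (h : consensus G j N ξ (t + 1) x = true) :
    (x, t + 1) ∉ N ∧ j ≤ cCount G (consensus G j N ξ t) x := by
  by_cases hN : (x, t + 1) ∈ N <;> simp_all [consensus]

theorem majorityVote_succ_eq_true_of_two_mul_cCount_gt {ε : ℝ} (hε : 0 ≤ ε) {L : V × ℕ → ℝ}
    {ξ : V → Bool} {t : ℕ} {x : V} (hL : ε ≤ L (x, t + 1))
    (hc : G.degree x < 2 * cCount G (majorityVote G ε L ξ t) x) :
    majorityVote G ε L ξ (t + 1) x = true := by
  have hc' : (G.degree x : ℝ) / 2 < cCount G (majorityVote G ε L ξ t) x := by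
    rw [div_lt_iff₀ two_pos]
    exact_mod_cast (mul_comm 2 _ ▸ hc : G.degree x < _)
  simp only [majorityVote]
  rw [if_neg (by linarith), if_neg hL.not_gt, if_neg hc'.not_gt, if_pos hc']

theorem consensus_le_majorityVote_of_degree_lt_two_mul {j : ℕ}
    (hj : ∀ x, G.degree x < 2 * j) {ε : ℝ} (hε : 0 ≤ ε) (L : V × ℕ → ℝ) (ξ : V → Bool) (t : ℕ) :
    consensus G j {p : V × ℕ | 1 ≤ p.2 ∧ L p < ε} ξ t ≤ majorityVote G ε L ξ t := by
  induction t with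
  | zero => exact le_rfl
  | succ t ih =>
    intro x
    cases hχ : consensus G j {p : V × ℕ | 1 ≤ p.2 ∧ L p < ε} ξ (t + 1) x with
    | false => exact Bool.false_le _
    | true =>
      obtain ⟨hN, hcount⟩ := consensus_succ_eq_true G hχ
      have hL : ε ≤ L (x, t + 1) := not_lt.mp fun h => hN ⟨Nat.le_add_left 1 t, h⟩
      exact (majorityVote_succ_eq_true_of_two_mul_cCount_gt G hε hL <|
        (hj x).trans_le (Nat.mul_le_mul_left 2 (hcount.trans (cCount_mono G ih x)))).ge

end Paper

open Paper in
theorem consensus_le_majorityVote_general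
    {V : Type*}
    (G : SimpleGraph V) [DecidableRel G.Adj] [∀ v, Fintype (G.neighborSet v)]
    (Δ : ℕ) (hΔ : IsLUB (Set.range fun x => G.degree x) Δ)
    (L : V × ℕ → ℝ) (ε : ℝ) (hε0 : 0 ≤ ε) (ξ : V → Bool)
    (x : V) (t : ℕ) :
    consensus G (Δ / 2 + 1) {p : V × ℕ | 1 ≤ p.2 ∧ L p < ε} ξ t x ≤
      majorityVote G ε L ξ t x := by
  have hdeg : ∀ y, G.degree y < 2 * (Δ / 2 + 1) := fun y => by
    have : G.degree y ≤ Δ := hΔ.1 ⟨y, rfl⟩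
    omega
  exact consensus_le_majorityVote_of_degree_lt_two_mul G hdeg hε0 L ξ t x

open Paper in
/-- pathwise domination of the `⌊Δ/2 + 1⌋`-threshold Consensus Process by the
`ε`-noise Majority Vote Process driven by the same uniform values `L`. -/
theorem consensus_le_majorityVote
    {V : Type*} [Infinite V]
    (G : SimpleGraph V) [DecidableRel G.Adj] [∀ v, Fintype (G.neighborSet v)]
    (hconn : G.Connected)
    (Δ : ℕ) (hΔ : IsLUB (Set.range fun x => G.degree x) Δ)
    (hjδ : ∀ x, Δ / 2 + 1 ≤ G.degree x)
    (L : V × ℕ → ℝ) (ε : ℝ) (hε0 : 0 ≤ ε) (hε1 : ε ≤ 1) (ξ : V → Bool)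
    (x : V) (t : ℕ) :
    consensus G (Δ / 2 + 1) {p : V × ℕ | 1 ≤ p.2 ∧ L p < ε} ξ t x ≤
      majorityVote G ε L ξ t x :=
  consensus_le_majorityVote_general G Δ hΔ L ε hε0 ξ x t
end
end
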